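/- arXiv:2512.22620 — 3 statements merged into one kernel-verified Lean document; each statement's English description precedes it below -/
import Mathlib

section
/- Let X and X̄ be complex p×q matrices and let Y and Ȳ be p×p Hermitian positive definite complex matrices. Then ln det(I + Xᴴ Y⁻¹ X) ≥ ln det(I + X̄ᴴ Ȳ⁻¹ X̄) − Tr(X̄ᴴ Ȳ⁻¹ X̄) + 2 Re(Tr(X̄ᴴ Ȳ⁻¹ X)) − Tr((Ȳ + X̄ X̄ᴴ)⁻¹ X̄ X̄ᴴ Ȳ⁻¹ (Y + X X ᴴ)), where both determinants are positive reals (since I + Xᴴ Y⁻¹ X and I + X̄ᴴ Ȳ⁻¹ X̄ are Hermitian positive definite) and both trace expressions other than the Re-trace term are real. -/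
/-!
Write `M = 1 + Xᴴ Y⁻¹ X` and `W = 1 + X̄ᴴ Ȳ⁻¹ X̄`. By the Woodbury identity
`M⁻¹ = 1 - Xᴴ (Y + X Xᴴ)⁻¹ X` is the error covariance of the linear MMSE estimate of `s` from
`y = X s + w`, so `M⁻¹ ≤ mseMatrix X Y T` for every receiver `T`. The bound `log det A ≤ tr A - n`,
applied to `W^{1/2} M⁻¹ W^{1/2}`, gives
`log det W - log det M ≤ tr (W M⁻¹) - q ≤ tr (W · mseMatrix X Y T) - q`.
For the MMSE receiver `T = X̄ᴴ (Ȳ + X̄ X̄ᴴ)⁻¹` of `(X̄, Ȳ)` one has `W T = X̄ᴴ Ȳ⁻¹`, which turns the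
right-hand side into the stated expression.
-/

open Matrix ComplexOrder

open scoped MatrixOrder

namespace Matrix

section CommRing

variable {α : Type*} [CommRing α] {m n : Type*} [Fintype m] [DecidableEq m] [Fintype n]
  [DecidableEq n]

theorem inv_mul_sub_mul_inv {A B : Matrix n n α} (hA : IsUnit A.det) (hB : IsUnit B.det) :
    A⁻¹ * (A - B) * B⁻¹ = B⁻¹ - A⁻¹ := by
  rw [mul_sub, sub_mul, nonsing_inv_mul _ hA, one_mul, mul_nonsing_inv_cancel_right _ _ hB]

theorem one_add_mul_inv_mul_mul_mul_inv {U : Matrix n m α} {Y : Matrix m m α} {V : Matrix m n α}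
    (hY : IsUnit Y.det) (hS : IsUnit (Y + V * U).det) :
    (1 + U * Y⁻¹ * V) * (U * (Y + V * U)⁻¹) = U * Y⁻¹ := by
  have h : (1 + U * Y⁻¹ * V) * U = U * Y⁻¹ * (Y + V * U) := by
    rw [Matrix.add_mul, Matrix.one_mul, Matrix.mul_add, nonsing_inv_mul_cancel_right _ _ hY,
      Matrix.mul_assoc (U * Y⁻¹) V U]
  rw [← Matrix.mul_assoc, h, mul_nonsing_inv_cancel_right _ _ hS]

theorem inv_one_add_mul_inv_mul {U : Matrix n m α} {Y : Matrix m m α} {V : Matrix m n α}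
    (hY : IsUnit Y.det) (hS : IsUnit (Y + V * U).det) :
    (1 + U * Y⁻¹ * V)⁻¹ = 1 - U * (Y + V * U)⁻¹ * V := by
  refine inv_eq_right_inv ?_
  rw [Matrix.mul_sub, Matrix.mul_one, ← Matrix.mul_assoc, one_add_mul_inv_mul_mul_mul_inv hY hS,
    add_sub_cancel_right]

end CommRing

section RCLike

variable {𝕜 : Type*} [RCLike 𝕜] {n : Type*} [Fintype n]

theorem IsHermitian.im_trace_mul_eq_zero {A B : Matrix n n 𝕜} (hA : A.IsHermitian)
    (hB : B.IsHermitian) : RCLike.im (A * B).trace = 0 := by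
  rw [← RCLike.conj_eq_iff_im, ← RCLike.star_def, ← trace_conjTranspose, conjTranspose_mul,
    hA.eq, hB.eq, trace_mul_comm]

variable [DecidableEq n]

theorem PosDef.log_re_det_le_re_trace_sub_card {A : Matrix n n 𝕜} (hA : A.PosDef) :
    Real.log (RCLike.re A.det) ≤ RCLike.re A.trace - Fintype.card n := by
  rw [hA.1.det_eq_prod_eigenvalues, hA.1.trace_eq_sum_eigenvalues, ← RCLike.ofReal_prod,
    ← RCLike.ofReal_sum, RCLike.ofReal_re, RCLike.ofReal_re,
    Real.log_prod fun i _ => (hA.eigenvalues_pos i).ne']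
  calc ∑ i, Real.log (hA.1.eigenvalues i) ≤ ∑ i, (hA.1.eigenvalues i - 1) :=
        Finset.sum_le_sum fun i _ => Real.log_le_sub_one_of_pos (hA.eigenvalues_pos i)
    _ = _ := by simp [Finset.sum_sub_distrib]

theorem PosDef.log_re_det_mul {A B : Matrix n n 𝕜} (hA : A.PosDef) (hB : B.PosDef) :
    Real.log (RCLike.re (A * B).det) =
      Real.log (RCLike.re A.det) + Real.log (RCLike.re B.det) := by
  obtain ⟨hA_re, hA_im⟩ := RCLike.pos_iff.mp hA.det_pos
  obtain ⟨hB_re, -⟩ := RCLike.pos_iff.mp hB.det_pos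
  rw [det_mul, RCLike.mul_re, hA_im, zero_mul, sub_zero, Real.log_mul hA_re.ne' hB_re.ne']

theorem PosSemidef.trace_mul_eq_trace_sqrt_mul_mul_sqrt {A : Matrix n n 𝕜} (hA : A.PosSemidef)
    (B : Matrix n n 𝕜) : (A * B).trace = (CFC.sqrt A * B * CFC.sqrt A).trace := by
  conv_lhs => rw [← CFC.sqrt_mul_sqrt_self A hA.nonneg, mul_assoc, trace_mul_comm]

theorem PosSemidef.trace_mul_mono {W A B : Matrix n n 𝕜} (hW : W.PosSemidef) (hAB : A ≤ B) :
    (W * A).trace ≤ (W * B).trace := by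
  have hR : (CFC.sqrt W).IsHermitian := (CFC.sqrt_nonneg W).posSemidef.isHermitian
  have h := ((le_iff.mp hAB).conjTranspose_mul_mul_same (CFC.sqrt W)).trace_nonneg
  rwa [hR.eq, ← hW.trace_mul_eq_trace_sqrt_mul_mul_sqrt, mul_sub, trace_sub, sub_nonneg] at h

theorem PosDef.log_re_det_add_log_re_det_le {A B : Matrix n n 𝕜} (hA : A.PosDef) (hB : B.PosDef) :
    Real.log (RCLike.re A.det) + Real.log (RCLike.re B.det) ≤
      RCLike.re (A * B).trace - Fintype.card n := by
  set R := CFC.sqrt A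
  have hRR : R * R = A := CFC.sqrt_mul_sqrt_self A hA.posSemidef.nonneg
  have hR : R.IsHermitian := (CFC.sqrt_nonneg A).posSemidef.isHermitian
  have hRB : (R * B * R).PosDef := by
    have hR_det : IsUnit R.det := by
      refine isUnit_iff_ne_zero.mpr fun h0 => hA.det_pos.ne' ?_
      rw [← hRR, det_mul, h0, zero_mul]
    simpa [hR.eq] using hB.conjTranspose_mul_mul_same
      (mulVec_injective_iff_isUnit.mpr ((isUnit_iff_isUnit_det R).mpr hR_det))
  have h_det : (R * B * R).det = (A * B).det := by
    rw [det_mul, det_mul, mul_right_comm, ← det_mul, hRR, det_mul]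
  rw [← hA.log_re_det_mul hB, ← h_det, hA.posSemidef.trace_mul_eq_trace_sqrt_mul_mul_sqrt]
  exact hRB.log_re_det_le_re_trace_sub_card

theorem PosDef.log_re_det_sub_log_re_det_le {W M E : Matrix n n 𝕜} (hW : W.PosDef)
    (hM : M.PosDef) (hE : M⁻¹ ≤ E) :
    Real.log (RCLike.re W.det) - Real.log (RCLike.re M.det) ≤
      RCLike.re (W * E).trace - Fintype.card n := by
  have h_inv : Real.log (RCLike.re M.det) + Real.log (RCLike.re M⁻¹.det) = 0 := by
    rw [← hM.log_re_det_mul hM.inv, mul_nonsing_inv _ hM.det_pos.ne'.isUnit, det_one,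
      RCLike.one_re, Real.log_one]
  have := hW.log_re_det_add_log_re_det_le hM.inv
  have := RCLike.re_le_re (hW.posSemidef.trace_mul_mono hE)
  linarith

end RCLike

section Estimation

variable {𝕜 : Type*} [RCLike 𝕜] {m n : Type*} [Fintype m] [Fintype n] [DecidableEq n]

/-- The error covariance of the linear estimate `T y` of `s` from `y = X s + w`, where `s` and the
noise `w` are uncorrelated with covariances `1` and `Y`. -/
def mseMatrix (X : Matrix m n 𝕜) (Y : Matrix m m 𝕜) (T : Matrix n m 𝕜) : Matrix n n 𝕜 :=
  (1 - T * X) * (1 - T * X)ᴴ + T * Y * Tᴴ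

theorem mseMatrix_eq (X : Matrix m n 𝕜) (Y : Matrix m m 𝕜) (T : Matrix n m 𝕜) :
    mseMatrix X Y T = 1 - T * X - Xᴴ * Tᴴ + T * (Y + X * Xᴴ) * Tᴴ := by
  simp only [mseMatrix, conjTranspose_sub, conjTranspose_one, conjTranspose_mul, Matrix.sub_mul,
    Matrix.mul_sub, Matrix.one_mul, Matrix.mul_one, Matrix.mul_add, Matrix.add_mul,
    Matrix.mul_assoc]
  abel

theorem inv_one_add_le_mseMatrix [DecidableEq m] {X : Matrix m n 𝕜} {Y : Matrix m m 𝕜}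
    (hY : Y.PosDef) (T : Matrix n m 𝕜) : (1 + Xᴴ * Y⁻¹ * X)⁻¹ ≤ mseMatrix X Y T := by
  set S := Y + X * Xᴴ
  have hS : S.PosDef := hY.add_posSemidef (posSemidef_self_mul_conjTranspose X)
  have hS_det : IsUnit S.det := hS.det_pos.ne'.isUnit
  have h_square : mseMatrix X Y T - (1 + Xᴴ * Y⁻¹ * X)⁻¹ =
      (T - Xᴴ * S⁻¹) * S * (T - Xᴴ * S⁻¹)ᴴ := by
    rw [inv_one_add_mul_inv_mul hY.det_pos.ne'.isUnit hS_det, mseMatrix_eq]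
    simp only [conjTranspose_sub, conjTranspose_mul, conjTranspose_conjTranspose, hS.1.inv.eq,
      Matrix.sub_mul, Matrix.mul_sub, Matrix.mul_assoc, mul_nonsing_inv_cancel_left _ _ hS_det,
      nonsing_inv_mul_cancel_left _ _ hS_det]
    abel
  rw [le_iff, h_square]
  exact hS.posSemidef.mul_mul_conjTranspose_same _

theorem IsHermitian.re_trace_mul_mseMatrix {W : Matrix n n 𝕜} (hW : W.IsHermitian)
    (X : Matrix m n 𝕜) (Y : Matrix m m 𝕜) (T : Matrix n m 𝕜) :
    RCLike.re (W * mseMatrix X Y T).trace = RCLike.re W.trace - 2 * RCLike.re (W * T * X).trace +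
      RCLike.re (W * T * (Y + X * Xᴴ) * Tᴴ).trace := by
  have h_adj : (W * (Xᴴ * Tᴴ)).trace = star (W * T * X).trace := by
    rw [← trace_conjTranspose, conjTranspose_mul, conjTranspose_mul, hW.eq, trace_mul_comm,
      Matrix.mul_assoc]
  rw [mseMatrix_eq, Matrix.mul_add, Matrix.mul_sub, Matrix.mul_sub, Matrix.mul_one, trace_add,
    trace_sub, trace_sub, h_adj]
  simp only [map_add, map_sub, RCLike.star_def, RCLike.conj_re, Matrix.mul_assoc]
  ring

end Estimation

end Matrix

/-- The log-det lower-bound inequality (SCA bound): for `X, X̄ ∈ ℂ^{p×q}` and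
Hermitian positive definite `Y, Ȳ ∈ ℂ^{p×p}`,
`ln det(I + Xᴴ Y⁻¹ X) ≥ ln det(I + X̄ᴴ Ȳ⁻¹ X̄) − Tr(X̄ᴴ Ȳ⁻¹ X̄) + 2 Re Tr(X̄ᴴ Ȳ⁻¹ X)
  − Tr((Ȳ + X̄X̄ᴴ)⁻¹ X̄X̄ᴴ Ȳ⁻¹ (Y + XXᴴ))`,
where both determinants are positive reals and the non-`Re` trace terms are real. -/
theorem stmt4 {p q : ℕ} (X Xb : Matrix (Fin p) (Fin q) ℂ)
    (Y Yb : Matrix (Fin p) (Fin p) ℂ) (hY : Y.PosDef) (hYb : Yb.PosDef) :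
    Real.log ((1 + Xᴴ * Y⁻¹ * X).det.re)
      ≥ Real.log ((1 + Xbᴴ * Yb⁻¹ * Xb).det.re)
        - ((Xbᴴ * Yb⁻¹ * Xb).trace).re
        + 2 * ((Xbᴴ * Yb⁻¹ * X).trace).re
        - (((Yb + Xb * Xbᴴ)⁻¹ * (Xb * Xbᴴ) * Yb⁻¹ * (Y + X * Xᴴ)).trace).re ∧
    (0 < (1 + Xᴴ * Y⁻¹ * X).det.re ∧ (1 + Xᴴ * Y⁻¹ * X).det.im = 0) ∧
    (0 < (1 + Xbᴴ * Yb⁻¹ * Xb).det.re ∧ (1 + Xbᴴ * Yb⁻¹ * Xb).det.im = 0) ∧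
    ((Xbᴴ * Yb⁻¹ * Xb).trace).im = 0 ∧
    (((Yb + Xb * Xbᴴ)⁻¹ * (Xb * Xbᴴ) * Yb⁻¹ * (Y + X * Xᴴ)).trace).im = 0 := by
  set Sb := Yb + Xb * Xbᴴ
  have hSb : Sb.PosDef := hYb.add_posSemidef (posSemidef_self_mul_conjTranspose Xb)
  have hK : (Xbᴴ * Yb⁻¹ * Xb).PosSemidef := hYb.inv.posSemidef.conjTranspose_mul_mul_same Xb
  have hM : (1 + Xᴴ * Y⁻¹ * X).PosDef :=
    PosDef.one.add_posSemidef (hY.inv.posSemidef.conjTranspose_mul_mul_same X)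
  have hW : (1 + Xbᴴ * Yb⁻¹ * Xb).PosDef := PosDef.one.add_posSemidef hK
  have hWT : (1 + Xbᴴ * Yb⁻¹ * Xb) * (Xbᴴ * Sb⁻¹) = Xbᴴ * Yb⁻¹ :=
    one_add_mul_inv_mul_mul_mul_inv hYb.det_pos.ne'.isUnit hSb.det_pos.ne'.isUnit
  have h_last : (Xbᴴ * Yb⁻¹ * (Y + X * Xᴴ) * (Xbᴴ * Sb⁻¹)ᴴ).trace =
      (Sb⁻¹ * (Xb * Xbᴴ) * Yb⁻¹ * (Y + X * Xᴴ)).trace := by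
    rw [conjTranspose_mul, hSb.1.inv.eq, conjTranspose_conjTranspose, trace_mul_comm]
    simp only [Matrix.mul_assoc]
  have h_bound := hW.log_re_det_sub_log_re_det_le hM (inv_one_add_le_mseMatrix hY (Xbᴴ * Sb⁻¹))
  rw [hW.1.re_trace_mul_mseMatrix, hWT, h_last, trace_add, trace_one] at h_bound
  simp only [RCLike.re_to_complex, Complex.add_re, Complex.natCast_re, Fintype.card_fin]
    at h_bound
  have h_herm : (Sb⁻¹ * (Xb * Xbᴴ) * Yb⁻¹).IsHermitian := by
    rw [show Xb * Xbᴴ = Sb - Yb from (add_sub_cancel_left Yb _).symm,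
      inv_mul_sub_mul_inv hSb.det_pos.ne'.isUnit hYb.det_pos.ne'.isUnit]
    exact hYb.1.inv.sub hSb.1.inv
  obtain ⟨hM_re, hM_im⟩ := Complex.pos_iff.mp hM.det_pos
  obtain ⟨hW_re, hW_im⟩ := Complex.pos_iff.mp hW.det_pos
  refine ⟨by linarith, ⟨hM_re, hM_im.symm⟩, ⟨hW_re, hW_im.symm⟩,
    (Complex.nonneg_iff.mp hK.trace_nonneg).2.symm, ?_⟩
  exact h_herm.im_trace_mul_eq_zero (hY.add_posSemidef (posSemidef_self_mul_conjTranspose X)).1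
end

section
/- Let H ∈ ℂ^{N_u×N_t}, let C ∈ ℂ^{N_u×N_u} and S ∈ ℂ^{N_u×N_u} be Hermitian positive semidefinite, let σ² > 0, and for Hermitian positive semidefinite V ∈ ℂ^{N_t×N_t} define B(V) = C + H V Hᴴ + σ² I and the rate R(V) = ln det(B(V) + S) − ln det(B(V)). Then for all Hermitian positive semidefinite V and V₀, R(V) ≥ ln det(B(V) + S) − ln det(B(V₀)) − Re(Tr(Hᴴ B(V₀)⁻¹ H (V − V₀))). -/
/-!
The `S` terms cancel, so the claim is the tangent-plane bound for the concave function
`log det` at `B(V₀)`, evaluated at `B(V)`, with `B(V) - B(V₀) = H (V - V₀) Hᴴ`. The tangent bound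
reduces, after the congruence `M = B(V₀)^{-1/2} B(V) B(V₀)^{-1/2}`, to `log det M ≤ Tr M - n`,
which is `log λ ≤ λ - 1` summed over the eigenvalues of `M`.
-/

open Matrix ComplexOrder

namespace Matrix.PosDef

variable {𝕜 n : Type*} [RCLike 𝕜] [Fintype n] [DecidableEq n]

theorem log_det_le_trace_sub_card {A : Matrix n n 𝕜} (hA : A.PosDef) :
    Real.log (RCLike.re A.det) ≤ RCLike.re A.trace - Fintype.card n := by
  rw [hA.1.det_eq_prod_eigenvalues, ← RCLike.ofReal_prod, RCLike.ofReal_re,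
    hA.1.trace_eq_sum_eigenvalues, ← RCLike.ofReal_sum, RCLike.ofReal_re,
    Real.log_prod fun i _ => (hA.eigenvalues_pos i).ne']
  calc ∑ i, Real.log (hA.1.eigenvalues i) ≤ ∑ i, (hA.1.eigenvalues i - 1) :=
        Finset.sum_le_sum fun i _ => Real.log_le_sub_one_of_pos (hA.eigenvalues_pos i)
    _ = _ := by simp [Finset.sum_sub_distrib]

open scoped MatrixOrder in
theorem log_det_le_log_det_add_re_trace {A B : Matrix n n 𝕜} (hA : A.PosDef) (hB : B.PosDef) :
    Real.log (RCLike.re B.det) ≤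
      Real.log (RCLike.re A.det) + RCLike.re (A⁻¹ * (B - A)).trace := by
  set L := CFC.sqrt A⁻¹
  have hL : L.IsHermitian := (CFC.sqrt_nonneg _).posSemidef.1
  have hLL : L * L = A⁻¹ := CFC.sqrt_mul_sqrt_self _ hA.inv.posSemidef.nonneg
  obtain ⟨a, ha, hda⟩ := RCLike.pos_iff_exists_ofReal.mp hA.det_pos
  obtain ⟨b, hb, hdb⟩ := RCLike.pos_iff_exists_ofReal.mp hB.det_pos
  have hdet : (L * B * L).det = ((a⁻¹ * b : ℝ) : 𝕜) := by
    rw [det_mul, det_mul, mul_right_comm, ← det_mul, hLL, det_nonsing_inv, Ring.inverse_eq_inv',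
      ← hda, ← hdb, RCLike.ofReal_mul, RCLike.ofReal_inv]
  have hM : (L * B * L).PosDef := by
    have hpsd := hB.posSemidef.mul_mul_conjTranspose_same L
    rw [hL.eq] at hpsd
    refine hpsd.posDef_iff_det_ne_zero.mpr ?_
    rw [hdet]
    exact_mod_cast (by positivity : 0 < a⁻¹ * b).ne'
  have htr : (L * B * L).trace = Fintype.card n + (A⁻¹ * (B - A)).trace := by
    rw [trace_mul_cycle, hLL, Matrix.mul_sub, nonsing_inv_mul _ hA.det_pos.ne'.isUnit,
      trace_sub, trace_one]
    ring
  have key := hM.log_det_le_trace_sub_card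
  rw [hdet, RCLike.ofReal_re, Real.log_mul (inv_pos.2 ha).ne' hb.ne', Real.log_inv, htr,
    map_add, RCLike.natCast_re] at key
  rw [← hda, ← hdb, RCLike.ofReal_re, RCLike.ofReal_re]
  linarith

end Matrix.PosDef

theorem Matrix.PosSemidef.posDef_add_mul_mul_conjTranspose_add_smul_one {𝕜 m n : Type*}
    [RCLike 𝕜] [Fintype m] [Fintype n] [DecidableEq m] {C : Matrix m m 𝕜} (hC : C.PosSemidef)
    {W : Matrix n n 𝕜} (hW : W.PosSemidef) (H : Matrix m n 𝕜) {σ : ℝ} (hσ : 0 < σ) :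
    (C + H * W * Hᴴ + (σ : 𝕜) • 1).PosDef := by
  refine PosDef.posSemidef_add (hC.add (hW.mul_mul_conjTranspose_same H)) ?_
  rw [← RCLike.real_smul_eq_coe_smul]
  exact PosDef.one.smul hσ

theorem stmt8_general {Nu Nt : ℕ} (H : Matrix (Fin Nu) (Fin Nt) ℂ)
    (C S : Matrix (Fin Nu) (Fin Nu) ℂ) (hC : C.PosSemidef)
    (σ2 : ℝ) (hσ : 0 < σ2)
    (V V0 : Matrix (Fin Nt) (Fin Nt) ℂ) (hV : V.PosSemidef) (hV0 : V0.PosSemidef) :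
    Real.log (((C + H * V * Hᴴ + (σ2 : ℂ) • 1) + S).det.re)
        - Real.log ((C + H * V * Hᴴ + (σ2 : ℂ) • 1).det.re)
      ≥ Real.log (((C + H * V * Hᴴ + (σ2 : ℂ) • 1) + S).det.re)
        - Real.log ((C + H * V0 * Hᴴ + (σ2 : ℂ) • 1).det.re)
        - ((Hᴴ * (C + H * V0 * Hᴴ + (σ2 : ℂ) • 1)⁻¹ * H * (V - V0)).trace).re := by
  have hB : (C + H * V * Hᴴ + (σ2 : ℂ) • 1).PosDef :=
    hC.posDef_add_mul_mul_conjTranspose_add_smul_one hV H hσ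
  have hB0 : (C + H * V0 * Hᴴ + (σ2 : ℂ) • 1).PosDef :=
    hC.posDef_add_mul_mul_conjTranspose_add_smul_one hV0 H hσ
  have hdiff : C + H * V * Hᴴ + (σ2 : ℂ) • 1 - (C + H * V0 * Hᴴ + (σ2 : ℂ) • 1)
      = H * (V - V0) * Hᴴ := by
    simp only [Matrix.mul_sub, Matrix.sub_mul]
    abel
  have hconcave := hB0.log_det_le_log_det_add_re_trace hB
  rw [hdiff, ← Matrix.mul_assoc, ← Matrix.mul_assoc, trace_mul_cycle, ← Matrix.mul_assoc]
    at hconcave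
  simp only [RCLike.re_to_complex] at hconcave
  linarith

/-- SCA lower bound on the rate `R(V) = ln det(B(V)+S) − ln det(B(V))`
with `B(V) = C + H V Hᴴ + σ² I`: for all Hermitian positive semidefinite `V, V₀`,
`R(V) ≥ ln det(B(V)+S) − ln det(B(V₀)) − Re Tr(Hᴴ B(V₀)⁻¹ H (V − V₀))`. -/
theorem stmt8 {Nu Nt : ℕ} (H : Matrix (Fin Nu) (Fin Nt) ℂ)
    (C S : Matrix (Fin Nu) (Fin Nu) ℂ) (hC : C.PosSemidef) (hS : S.PosSemidef)
    (σ2 : ℝ) (hσ : 0 < σ2)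
    (V V0 : Matrix (Fin Nt) (Fin Nt) ℂ) (hV : V.PosSemidef) (hV0 : V0.PosSemidef) :
    Real.log (((C + H * V * Hᴴ + (σ2 : ℂ) • 1) + S).det.re)
        - Real.log ((C + H * V * Hᴴ + (σ2 : ℂ) • 1).det.re)
      ≥ Real.log (((C + H * V * Hᴴ + (σ2 : ℂ) • 1) + S).det.re)
        - Real.log ((C + H * V0 * Hᴴ + (σ2 : ℂ) • 1).det.re)
        - ((Hᴴ * (C + H * V0 * Hᴴ + (σ2 : ℂ) • 1)⁻¹ * H * (V - V0)).trace).re :=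
  stmt8_general H C S hC σ2 hσ V V0 hV hV0
end

section
/- Fix transmit antenna positions t_1,…,t_{N_t} ∈ ℝ³, a target position s ∈ ℝ³, reals ρ_s and λ with λ ≠ 0, a fixed vector f_r ∈ ℂ^{N_r}, vectors u ∈ ℂ^{N_r}, v ∈ ℂ^{N_t}, matrices W_1,…,W_K ∈ ℂ^{N_t×N_k}, and reals γ₀, σ_z². For a real variable x replacing the x-coordinate of t_m (for a fixed index m, with the other coordinates of t_m and all other positions fixed), define f_t(x) ∈ ℂ^{N_t} with j-th entry exp(i(2π/λ)‖t_j(x) − s‖) (only entry m depends on x), G(x) = ρ_s f_r f_t(x)ᴴ, M = γ₀ Σ_{u'=1}^K W_{u'} W_{u'}ᴴ − v vᴴ, and κ(x) = uᴴ G(x) M G(x)ᴴ u + γ₀ σ_z² uᴴ u (a real number since M is Hermitian). Let e(x) = (f_rᴴ u) · uᴴ G(x) M ∈ ℂ^{1×N_t}. If t_m(x₀) ≠ s, then κ is differentiable at x₀ with derivative κ'(x₀) = −(4πρ_s/λ) · Im( e(x₀)(m) · exp(i(2π/λ)‖t_m(x₀) − s‖) · (x₀ − s₁)/‖t_m(x₀)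 − s‖ ), where s₁ is the x-coordinate of s. -/
/-!
Only the `m`-th entry of `f_t` depends on `x`; its derivative at `x₀` is
`i (2π/λ) f_t(x₀)_m (x₀ - s₁)/‖t_m(x₀) - s‖`, the last factor being the derivative of the
distance. With `g = Gᴴu = ρ_s (f_rᴴu) f_t` the objective is `κ = Re (gᴴ M g) + const`, and for
Hermitian `M` the derivative of `Re (gᴴ M g)` is `2 Re (gᴴ M g')`. As `gᴴ M = uᴴ G M`, only the
entry `e(x₀)(m)` enters, and `Re (i z) = -Im z` gives the sign.
-/

open Matrix

theorem Matrix.isHermitian_vecMulVec_star {n α : Type*} [Mul α] [StarMul α] (v : n → α) :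
    (vecMulVec v (star v)).IsHermitian := by
  rw [IsHermitian, conjTranspose_vecMulVec, star_star]

section QuadraticForm

variable {n : Type*} [Fintype n]

theorem Matrix.star_dotProduct_mul_mul_conjTranspose_mulVec {m α : Type*} [Fintype m]
    [CommSemiring α] [StarRing α] (G : Matrix m n α) (M : Matrix n n α) (u : m → α) :
    star u ⬝ᵥ (G * M * Gᴴ) *ᵥ u = star (Gᴴ *ᵥ u) ⬝ᵥ M *ᵥ (Gᴴ *ᵥ u) := by
  rw [star_mulVec, conjTranspose_conjTranspose, ← mulVec_mulVec, ← mulVec_mulVec,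
    dotProduct_mulVec]

theorem Matrix.IsHermitian.star_dotProduct_mulVec_comm {α : Type*} [CommSemiring α] [StarRing α]
    {M : Matrix n n α} (hM : M.IsHermitian) (x y : n → α) :
    star y ⬝ᵥ M *ᵥ x = star (star x ⬝ᵥ M *ᵥ y) := by
  rw [star_dotProduct, star_mulVec, hM.eq, dotProduct_mulVec]

theorem hasDerivAt_star_dotProduct_mulVec (M : Matrix n n ℂ) {f : ℝ → n → ℂ} {f' : n → ℂ}
    {x : ℝ} (hf : HasDerivAt f f' x) :
    HasDerivAt (fun y => star (f y) ⬝ᵥ M *ᵥ f y)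
      (star f' ⬝ᵥ M *ᵥ f x + star (f x) ⬝ᵥ M *ᵥ f') x := by
  have hf := hasDerivAt_pi.mp hf
  have hMf : ∀ i, HasDerivAt (fun y => (M *ᵥ f y) i) ((M *ᵥ f') i) x := fun i =>
    HasDerivAt.fun_sum fun j _ => (hf j).const_mul (M i j)
  simp only [dotProduct, ← Finset.sum_add_distrib]
  exact HasDerivAt.fun_sum fun i _ => ((hf i).star).mul (hMf i) |>.congr_deriv (by
    simp only [Pi.star_apply])

theorem Matrix.IsHermitian.hasDerivAt_re_star_dotProduct_mulVec {M : Matrix n n ℂ}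
    (hM : M.IsHermitian) {f : ℝ → n → ℂ} {f' : n → ℂ} {x : ℝ} (hf : HasDerivAt f f' x) :
    HasDerivAt (fun y => (star (f y) ⬝ᵥ M *ᵥ f y).re) (2 * (star (f x) ⬝ᵥ M *ᵥ f').re) x := by
  have h : HasDerivAt (fun y => Complex.reCLM (star (f y) ⬝ᵥ M *ᵥ f y)) _ x :=
    Complex.reCLM.hasFDerivAt.comp_hasDerivAt x (hasDerivAt_star_dotProduct_mulVec M hf)
  refine h.congr_deriv ?_
  rw [Complex.reCLM_apply, Complex.add_re, hM.star_dotProduct_mulVec_comm (f x) f',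
    Complex.star_def, Complex.conj_re, two_mul]

theorem Matrix.IsHermitian.hasDerivAt_re_star_dotProduct_mulVec_of_single [DecidableEq n]
    {M : Matrix n n ℂ} (hM : M.IsHermitian) {f : ℝ → n → ℂ} {i : n} {δ : ℂ} {x : ℝ}
    (hf : HasDerivAt f (Pi.single i δ) x) :
    HasDerivAt (fun y => (star (f y) ⬝ᵥ M *ᵥ f y).re) (2 * ((star (f x) ᵥ* M) i * δ).re) x := by
  simpa only [dotProduct_mulVec, dotProduct_single] using
    hM.hasDerivAt_re_star_dotProduct_mulVec hf

end QuadraticForm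

theorem hasDerivAt_pi_single {ι E : Type*} [Fintype ι] [DecidableEq ι] [NormedAddCommGroup E]
    [NormedSpace ℝ E] {f : ℝ → ι → E} {i : ι} {d : E} {x₀ : ℝ}
    (hi : HasDerivAt (fun x => f x i) d x₀) (hother : ∀ x j, j ≠ i → f x j = f x₀ j) :
    HasDerivAt f (Pi.single i d) x₀ := by
  refine hasDerivAt_pi.mpr fun j => ?_
  rcases eq_or_ne j i with rfl | hj
  · simpa using hi
  · simpa [hj, funext fun x => hother x j hj] using hasDerivAt_const x₀ (f x₀ j)

open scoped RealInnerProductSpace in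
theorem HasDerivAt.norm {F : Type*} [NormedAddCommGroup F] [InnerProductSpace ℝ F]
    {f : ℝ → F} {f' : F} {x : ℝ} (hf : HasDerivAt f f' x) (h0 : f x ≠ 0) :
    HasDerivAt (‖f ·‖) (⟪f x, f'⟫ / ‖f x‖) x := by
  have h := hf.norm_sq.sqrt (by positivity)
  simp only [Real.sqrt_sq (norm_nonneg _)] at h
  convert h using 1
  field_simp

theorem EuclideanSpace.hasDerivAt_norm_sub_of_coord {ι : Type*} [Fintype ι] [DecidableEq ι]
    {γ : ℝ → EuclideanSpace ℝ ι} {i : ι} {x₀ : ℝ} (hi : ∀ x, γ x i = x)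
    (hother : ∀ x j, j ≠ i → γ x j = γ x₀ j) {s : EuclideanSpace ℝ ι} (hne : γ x₀ ≠ s) :
    HasDerivAt (fun x => ‖γ x - s‖) ((x₀ - s i) / ‖γ x₀ - s‖) x₀ := by
  have hline : ∀ x, γ x = γ x₀ + (x - x₀) • EuclideanSpace.single i 1 := fun x => by
    ext j
    rcases eq_or_ne j i with rfl | hj
    · simp [hi]
    · simp [hj, hother x j hj]
  have hγ : HasDerivAt (fun x => γ x - s) (EuclideanSpace.single i 1) x₀ := by
    rw [funext hline]
    simpa using (((hasDerivAt_id x₀).sub_const x₀).smul_const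
      (EuclideanSpace.single i (1 : ℝ))).const_add (γ x₀) |>.sub_const s
  convert hγ.norm (sub_ne_zero.mpr hne) using 2
  simp [EuclideanSpace.inner_single_right, hi]

theorem stmt14_general {Nt Nr Nk K : ℕ} (m : Fin Nt)
    (t : ℝ → Fin Nt → EuclideanSpace ℝ (Fin 3))
    (s : EuclideanSpace ℝ (Fin 3)) (x₀ : ℝ)
    (htm0 : ∀ x, t x m 0 = x)
    (htm1 : ∀ x, t x m 1 = t x₀ m 1)
    (htm2 : ∀ x, t x m 2 = t x₀ m 2)
    (htother : ∀ x, ∀ j : Fin Nt, j ≠ m → t x j = t x₀ j)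
    (ρs lam : ℝ)
    (fr : Fin Nr → ℂ) (u : Fin Nr → ℂ) (v : Fin Nt → ℂ)
    (W : Fin K → Matrix (Fin Nt) (Fin Nk) ℂ)
    (γ0 σz2 : ℝ)
    (ft : ℝ → Fin Nt → ℂ)
    (hft : ∀ x (j : Fin Nt), ft x j
      = Complex.exp (Complex.I * ((2 * Real.pi / lam : ℝ) : ℂ) * ((‖t x j - s‖ : ℝ) : ℂ)))
    (G : ℝ → Matrix (Fin Nr) (Fin Nt) ℂ)
    (hG : ∀ x, G x = (ρs : ℂ) • vecMulVec fr (star (ft x)))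
    (M : Matrix (Fin Nt) (Fin Nt) ℂ)
    (hM : M = (γ0 : ℂ) • (∑ u', W u' * (W u')ᴴ) - vecMulVec v (star v))
    (e : ℝ → Fin Nt → ℂ)
    (he : ∀ x, e x = (star fr ⬝ᵥ u) • Matrix.vecMul (star u) (G x * M))
    (κ : ℝ → ℝ)
    (hκ : ∀ x, κ x = (star u ⬝ᵥ (G x * M * (G x)ᴴ).mulVec u).re
        + γ0 * σz2 * (star u ⬝ᵥ u).re)
    (hne : t x₀ m ≠ s) :
    HasDerivAt κ
      (-(4 * Real.pi * ρs / lam) *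
        (e x₀ m
          * Complex.exp (Complex.I * ((2 * Real.pi / lam : ℝ) : ℂ)
              * ((‖t x₀ m - s‖ : ℝ) : ℂ))
          * (((x₀ - s 0) / ‖t x₀ m - s‖ : ℝ) : ℂ)).im)
      x₀ := by
  set c : ℝ := 2 * Real.pi / lam
  set d : ℝ := (x₀ - s 0) / ‖t x₀ m - s‖
  set φ : ℂ := Complex.exp (Complex.I * c * (‖t x₀ m - s‖ : ℝ))
  set k : ℂ := ρs * (star fr ⬝ᵥ u)
  have hdist : HasDerivAt (fun x => ‖t x m - s‖) d x₀ :=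
    EuclideanSpace.hasDerivAt_norm_sub_of_coord htm0
      (fun x j hj => by fin_cases j <;> simp_all) hne
  have hft' : HasDerivAt ft (Pi.single m (φ * (Complex.I * c * d))) x₀ :=
    hasDerivAt_pi_single (by simpa only [hft] using (hdist.ofReal_comp.const_mul _).cexp)
      fun x j hj => by rw [hft, hft, htother x j hj]
  have hGu : ∀ x, (G x)ᴴ *ᵥ u = k • ft x := fun x => by
    rw [hG, conjTranspose_smul, conjTranspose_vecMulVec, star_star, smul_mulVec,
      vecMulVec_mulVec, op_smul_eq_smul, smul_smul, Complex.star_def, Complex.conj_ofReal]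
  have hMherm : M.IsHermitian := by
    rw [hM]
    exact (isHermitian_iff_isSelfAdjoint.mpr (isSelfAdjoint_sum _ fun i _ =>
      isHermitian_mul_conjTranspose_self (W i))).smul (Complex.conj_ofReal γ0) |>.sub
      (isHermitian_vecMulVec_star v)
  have he₀ : e x₀ m = (star fr ⬝ᵥ u) * (star ((G x₀)ᴴ *ᵥ u) ᵥ* M) m := by
    rw [he, ← vecMul_vecMul, star_mulVec, conjTranspose_conjTranspose]; rfl
  have hg' : HasDerivAt (fun x => (G x)ᴴ *ᵥ u)
      (Pi.single m (k * (φ * (Complex.I * c * d)))) x₀ := by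
    rw [← smul_eq_mul, Pi.single_smul']
    exact (hft'.const_smul k).congr_of_eventuallyEq (.of_forall hGu)
  have hκ' := (hMherm.hasDerivAt_re_star_dotProduct_mulVec_of_single hg').add_const
    (γ0 * σz2 * (star u ⬝ᵥ u).re)
  have hκfun : κ = fun x =>
      (star ((G x)ᴴ *ᵥ u) ⬝ᵥ M *ᵥ ((G x)ᴴ *ᵥ u)).re + γ0 * σz2 * (star u ⬝ᵥ u).re :=
    funext fun x => by rw [hκ, star_dotProduct_mul_mul_conjTranspose_mulVec]
  rw [hκfun]
  refine hκ'.congr_deriv ?_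
  set w := (star ((G x₀)ᴴ *ᵥ u) ᵥ* M) m
  have hphase : w * (k * (φ * (Complex.I * c * d)))
      = ((ρs * c : ℝ) : ℂ) * (Complex.I * ((star fr ⬝ᵥ u) * w * φ * d)) := by
    simp only [k]; push_cast; ring
  rw [he₀, hphase, Complex.re_ofReal_mul, Complex.I_mul_re]
  simp only [c]; ring

/-- Gradient of the reformulated sensing-SINR constraint function
`κ(x) = uᴴ G(x) M G(x)ᴴ u + γ₀σ_z² uᴴu` (with `G(x) = ρ_s f_r f_t(x)ᴴ`,
`f_t(x)_j = exp(i(2π/λ)‖t_j(x) − s‖)`, `M = γ₀ Σ_{u'} W_{u'}W_{u'}ᴴ − vvᴴ`,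
`e(x) = (f_rᴴu) uᴴ G(x) M`) with respect to the x-coordinate of the `m`-th BS
transmit movable antenna: if `t_m(x₀) ≠ s` then
`κ'(x₀) = −(4πρ_s/λ) Im( e(x₀)(m) exp(i(2π/λ)‖t_m(x₀)−s‖) (x₀−s₁)/‖t_m(x₀)−s‖ )`. -/
theorem stmt14 {Nt Nr Nk K : ℕ} (m : Fin Nt)
    (t : ℝ → Fin Nt → EuclideanSpace ℝ (Fin 3))
    (s : EuclideanSpace ℝ (Fin 3)) (x₀ : ℝ)
    (htm0 : ∀ x, t x m 0 = x)
    (htm1 : ∀ x, t x m 1 = t x₀ m 1)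
    (htm2 : ∀ x, t x m 2 = t x₀ m 2)
    (htother : ∀ x, ∀ j : Fin Nt, j ≠ m → t x j = t x₀ j)
    (ρs lam : ℝ) (hlam : lam ≠ 0)
    (fr : Fin Nr → ℂ) (u : Fin Nr → ℂ) (v : Fin Nt → ℂ)
    (W : Fin K → Matrix (Fin Nt) (Fin Nk) ℂ)
    (γ0 σz2 : ℝ)
    (ft : ℝ → Fin Nt → ℂ)
    (hft : ∀ x (j : Fin Nt), ft x j
      = Complex.exp (Complex.I * ((2 * Real.pi / lam : ℝ) : ℂ) * ((‖t x j - s‖ : ℝ) : ℂ)))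
    (G : ℝ → Matrix (Fin Nr) (Fin Nt) ℂ)
    (hG : ∀ x, G x = (ρs : ℂ) • vecMulVec fr (star (ft x)))
    (M : Matrix (Fin Nt) (Fin Nt) ℂ)
    (hM : M = (γ0 : ℂ) • (∑ u', W u' * (W u')ᴴ) - vecMulVec v (star v))
    (e : ℝ → Fin Nt → ℂ)
    (he : ∀ x, e x = (star fr ⬝ᵥ u) • Matrix.vecMul (star u) (G x * M))
    (κ : ℝ → ℝ)
    (hκ : ∀ x, κ x = (star u ⬝ᵥ (G x * M * (G x)ᴴ).mulVec u).re
        + γ0 * σz2 * (star u ⬝ᵥ u).re)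
    (hne : t x₀ m ≠ s) :
    HasDerivAt κ
      (-(4 * Real.pi * ρs / lam) *
        (e x₀ m
          * Complex.exp (Complex.I * ((2 * Real.pi / lam : ℝ) : ℂ)
              * ((‖t x₀ m - s‖ : ℝ) : ℂ))
          * (((x₀ - s 0) / ‖t x₀ m - s‖ : ℝ) : ℂ)).im)
      x₀ :=
  stmt14_general m t s x₀ htm0 htm1 htm2 htother ρs lam fr u v W γ0 σz2 ft hft G hG M hM e he κ hκ
    hne
end
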